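/- arXiv:2208.07336 — 7 statements merged into one kernel-verified Lean document; each statement's English description precedes it below -/
import Mathlib

section
/- Let 1 → N → G → H be an exact sequence of groups (N a normal subgroup of G with G/N embedding into H). If N is T-Jordan and H has bounded torsion subgroups, then G is T-Jordan. -/
/-- A group `G` is *T-Jordan* if there is a constant `J` such that every torsion
subgroup of `G` contains an abelian subgroup of index at most `J`. -/
def TJordan (G : Type*) [Group G] : Prop :=
  ∃ J : ℕ, ∀ H : Subgroup G, Monoid.IsTorsion H →
    ∃ A : Subgroup H, A.index ≠ 0 ∧ A.index ≤ J ∧ ∀ x ∈ A, ∀ y ∈ A, x * y = y * x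

/-- A group `G` has *bounded torsion subgroups* if there is a constant `T` such that
every torsion subgroup of `G` has order at most `T`. -/
def BoundedTorsionSubgroups (G : Type*) [Group G] : Prop :=
  ∃ T : ℕ, ∀ H : Subgroup G, Monoid.IsTorsion H →
    (H : Set G).Finite ∧ Nat.card H ≤ T

/-! Let `K ≤ G` be torsion. Then `f⁻¹ K ≤ N` and `g K ≤ H` are torsion, so `f⁻¹ K` has an
abelian subgroup `A` of index at most `J` and `|g K| ≤ T`. Since `f` is injective, `f A` has
the same index in `f (f⁻¹ K) = K ∩ ker g`, and `K ∩ ker g` has index `|g K|` in `K`; hence the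
abelian subgroup `f A` has index at most `J T` in `K`. -/

open Function Subgroup

theorem IsMulTorsion.of_injective {G H : Type*} [Monoid G] [Monoid H] {f : G →* H}
    (hf : Injective f) (tH : IsMulTorsion H) : IsMulTorsion G :=
  fun g ↦ hf.isOfFinOrder_iff.1 (tH (f g))

namespace Subgroup

variable {G G' : Type*} [Group G] [Group G']

theorem isMulTorsion_map (f : G →* G') {K : Subgroup G} (hK : IsMulTorsion K) :
    IsMulTorsion (K.map f) :=
  hK.of_surjective (f.subgroupMap_surjective K)

theorem isMulTorsion_comap {f : G' →* G} (hf : Injective f) {K : Subgroup G}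
    (hK : IsMulTorsion K) : IsMulTorsion (K.comap f) :=
  hK.of_injective (f := f.subgroupComap K) fun _ _ h ↦ Subtype.ext (hf congr($h.1))

theorem relIndex_map_eq_mul_card_map {N H : Type*} [Group N] [Group H] {f : N →* G}
    (hf : Injective f) {g : G →* H} (hexact : g.ker = f.range) {K : Subgroup G}
    {A : Subgroup N} (hAK : A ≤ K.comap f) :
    (A.map f).relIndex K = A.relIndex (K.comap f) * Nat.card (K.map g) := by
  have hker : (K.comap f).map f = g.ker ⊓ K := by rw [map_comap_eq, hexact]
  calc (A.map f).relIndex K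
      = (A.map f).relIndex ((K.comap f).map f) * ((K.comap f).map f).relIndex K :=
        (relIndex_mul_relIndex _ _ _ (map_mono hAK) (map_comap_le f K)).symm
    _ = A.relIndex (K.comap f) * Nat.card (K.map g) := by
        rw [relIndex_map_map_of_injective _ _ hf, hker, inf_relIndex_right, relIndex_ker]

end Subgroup

theorem tJordan_iff {G : Type*} [Group G] :
    TJordan G ↔ ∃ J : ℕ, ∀ K : Subgroup G, IsMulTorsion K →
      ∃ A ≤ K, IsMulCommutative A ∧ A.relIndex K ≠ 0 ∧ A.relIndex K ≤ J := by
  refine exists_congr fun J ↦ forall_congr' fun K ↦ imp_congr_right fun _ ↦ ⟨?_, ?_⟩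
  · rintro ⟨A, hA0, hAJ, hAcomm⟩
    have hA : (A.map K.subtype).subgroupOf K = A :=
      comap_map_eq_self_of_injective K.subtype_injective A
    refine ⟨A.map K.subtype, map_subtype_le A, ?_, ?_⟩
    · refine .of_setLike_mul_comm ?_
      rintro _ ⟨x, hx, rfl⟩ _ ⟨y, hy, rfl⟩
      exact congr($(hAcomm x hx y hy).1)
    · rw [relIndex, hA]
      exact ⟨hA0, hAJ⟩
  · rintro ⟨A, -, hAcomm, hA0, hAJ⟩
    exact ⟨A.subgroupOf K, hA0, hAJ, fun _ hx _ hy ↦ setLike_mul_comm hx hy⟩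

/-- If `1 → N → G → H` is an exact sequence of groups, `N` is T-Jordan and `H` has
bounded torsion subgroups, then `G` is T-Jordan. -/
theorem tJordan_of_exact_sequence {N G H : Type*} [Group N] [Group G] [Group H]
    (f : N →* G) (g : G →* H) (hf : Function.Injective f)
    (hexact : g.ker = f.range)
    (hN : TJordan N) (hH : BoundedTorsionSubgroups H) : TJordan G := by
  obtain ⟨J, hJ⟩ := tJordan_iff.1 hN
  obtain ⟨T, hT⟩ := hH
  refine tJordan_iff.2 ⟨J * T, fun K hK ↦ ?_⟩
  obtain ⟨hfin, hcard⟩ := hT (K.map g) (isMulTorsion_map g hK)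
  obtain ⟨A, hAK, hAcomm, hA0, hAJ⟩ := hJ (K.comap f) (isMulTorsion_comap hf hK)
  have : Finite (K.map g) := hfin.to_subtype
  refine ⟨A.map f, map_le_iff_le_comap.2 hAK, inferInstance, ?_, ?_⟩ <;>
    rw [relIndex_map_eq_mul_card_map hf hexact hAK]
  · exact mul_ne_zero hA0 Nat.card_pos.ne'
  · exact Nat.mul_le_mul hAJ hcard
end

section
/- Let 1 → N → G → H → 1 be a short exact sequence of groups. If N is a torsion group and G is T-Jordan, then H is T-Jordan. -/
/-- If `1 → N → G → H → 1` is a short exact sequence of groups, `N` is a torsion group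
and `G` is T-Jordan, then `H` is T-Jordan. -/
theorem tJordan_quotient_of_torsion_kernel {N G H : Type*} [Group N] [Group G] [Group H]
    (f : N →* G) (g : G →* H) (hf : Function.Injective f) (hg : Function.Surjective g)
    (hexact : g.ker = f.range)
    (hNtor : Monoid.IsTorsion N) (hG : TJordan G) : TJordan H := by
  obtain ⟨J, hJ⟩ := hG
  refine ⟨J, fun K hK => ?_⟩
  -- the preimage of K in G
  set P : Subgroup G := K.comap g with hP
  have hPtor : Monoid.IsTorsion P := by
    intro x
    obtain ⟨n, hn, hxn⟩ := (isOfFinOrder_iff_pow_eq_one).mp (hK ⟨g x.1, x.2⟩)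
    have : g (x.1 ^ n) = 1 := by
      have := congrArg Subtype.val hxn
      simpa [SubgroupClass.coe_pow, map_pow] using this
    have hker : x.1 ^ n ∈ f.range := by rw [← hexact]; exact this
    obtain ⟨m, hm⟩ := hker
    obtain ⟨k, hk, hmk⟩ := (isOfFinOrder_iff_pow_eq_one).mp (hNtor m)
    refine (isOfFinOrder_iff_pow_eq_one).mpr ⟨n * k, Nat.mul_pos hn hk, ?_⟩
    ext
    simp only [SubgroupClass.coe_pow, OneMemClass.coe_one]
    calc x.1 ^ (n * k) = (x.1 ^ n) ^ k := by rw [pow_mul]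
      _ = f m ^ k := by rw [hm]
      _ = f (m ^ k) := by rw [map_pow]
      _ = 1 := by rw [hmk, map_one]
  obtain ⟨A, hA0, hAJ, hAab⟩ := hJ P hPtor
  -- the map from P onto K
  let φ : P →* K := {
    toFun := fun x => ⟨g x.1, x.2⟩
    map_one' := by ext; simp
    map_mul' := fun a b => by ext; simp }
  have hφ : Function.Surjective φ := by
    rintro ⟨k, hk⟩
    obtain ⟨x, hx⟩ := hg k
    exact ⟨⟨x, by simpa [hP, hx] using hk⟩, by simp [φ, hx]⟩
  refine ⟨A.map φ, ?_, ?_, ?_⟩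
  · intro h0
    exact hA0 (Nat.eq_zero_of_zero_dvd (h0 ▸ A.index_map_dvd hφ))
  · exact le_trans (Nat.le_of_dvd (Nat.pos_of_ne_zero hA0) (A.index_map_dvd hφ)) hAJ
  · rintro x ⟨a, ha, rfl⟩ y ⟨b, hb, rfl⟩
    rw [← map_mul, ← map_mul, hAab a ha b hb]
end

section
/- Let 1 → N → G → H → 1 be a short exact sequence of groups. If N is finite and H is virtually solvable, then G is virtually solvable and its virtual derived length satisfies ℓ_vir(G) ≤ ℓ_vir(H) + 1. -/
/-!
Pull a finite-index subgroup `K ≤ H` of derived length `≤ m` back to `K' = g⁻¹(K)`, still of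
finite index. Since `g` maps `K'^(m)` into `K^(m) = 1`, the subgroup `D = K'^(m)` lies in the finite
kernel. Being finite and normal in `K'`, `D` has a centralizer `C` of finite index in `K'`, and
`C^(m) ≤ D ∩ C` is abelian, so `C` has derived length `≤ m + 1`.
-/

open Subgroup

/-- `ℓ_vir(G) ≤ n`. -/
def VirtDerivedLengthLE (G : Type*) [Group G] (n : ℕ) : Prop :=
  ∃ K : Subgroup G, K.FiniteIndex ∧ derivedSeries K n = ⊥

section

variable {G G' : Type*} [Group G] [Group G']

theorem derivedSeries_le_ker (f : G →* G') {n : ℕ} (h : derivedSeries G' n = ⊥) :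
    derivedSeries G n ≤ f.ker :=
  map_le_iff_le_comap.1 (h ▸ map_derivedSeries_le_derivedSeries f n)

theorem derivedSeries_eq_bot_of_injective {f : G →* G'} (hf : Function.Injective f) {n : ℕ}
    (h : derivedSeries G' n = ⊥) : derivedSeries G n = ⊥ :=
  le_bot_iff.1 ((f.ker_eq_bot_iff.2 hf) ▸ derivedSeries_le_ker f h)

theorem finite_derivedSeries_of_finite_ker (f : G →* G') [Finite f.ker] {n : ℕ}
    (h : derivedSeries G' n = ⊥) : Finite (derivedSeries G n) :=
  Finite.of_injective _ (inclusion_injective (derivedSeries_le_ker f h))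

theorem MonoidHom.finite_ker_subgroupComap (f : G →* G') [Finite f.ker] (K : Subgroup G') :
    Finite (f.subgroupComap K).ker :=
  Finite.of_injective
    (fun x ↦ (⟨x.1.1, congrArg Subtype.val (MonoidHom.mem_ker.1 x.2)⟩ : f.ker))
    fun _ _ hxy ↦ Subtype.ext (Subtype.ext (congrArg Subtype.val hxy :))

/-- The centralizer of `D` contains the kernel of the conjugation action on `D`, whose image
`MulAut D` is finite. -/
theorem finiteIndex_centralizer_of_finite (D : Subgroup G) [D.Normal] [Finite D] :
    (centralizer (D : Set G)).FiniteIndex := by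
  have hle : (MulAut.conjNormal : G →* MulAut D).ker ≤ centralizer D := by
    intro c hc
    rw [mem_centralizer_iff]
    intro d hd
    have hconj := MulAut.conjNormal_apply c ⟨d, hd⟩
    rw [(MonoidHom.mem_ker).1 hc, MulAut.one_apply] at hconj
    calc d * c = c * d * c⁻¹ * c := by rw [← hconj]
      _ = c * d := by group
  exact finiteIndex_of_le hle

theorem virtDerivedLengthLE_succ_of_finite_derivedSeries (m : ℕ) [Finite (derivedSeries G m)] :
    VirtDerivedLengthLE G (m + 1) := by
  set C := centralizer (derivedSeries G m : Set G)
  refine ⟨C, finiteIndex_centralizer_of_finite _, ?_⟩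
  rw [derivedSeries_succ, commutator_eq_bot_iff_le_centralizer]
  intro x hx
  rw [mem_centralizer_iff]
  intro y hy
  have hyD : (y : G) ∈ derivedSeries G m :=
    map_derivedSeries_le_derivedSeries C.subtype m ⟨y, hy, rfl⟩
  exact Subtype.ext (mem_centralizer_iff.1 x.2 y hyD)

theorem VirtDerivedLengthLE.of_finiteIndex {K : Subgroup G} [K.FiniteIndex] {n : ℕ}
    (h : VirtDerivedLengthLE K n) : VirtDerivedLengthLE G n := by
  obtain ⟨L, hL, hLn⟩ := h
  refine ⟨L.map K.subtype, ⟨?_⟩, ?_⟩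
  · rw [index_map_subtype]
    exact mul_ne_zero hL.index_ne_zero FiniteIndex.index_ne_zero
  · exact derivedSeries_eq_bot_of_injective
      (f := (L.equivMapOfInjective K.subtype K.subtype_injective).symm.toMonoidHom)
      (MulEquiv.injective _) hLn

theorem VirtDerivedLengthLE.of_surjective_of_finite_ker {g : G →* G'}
    (hg : Function.Surjective g) [Finite g.ker] {m : ℕ} (h : VirtDerivedLengthLE G' m) :
    VirtDerivedLengthLE G (m + 1) := by
  obtain ⟨K, hK, hKm⟩ := h
  have : (K.comap g).FiniteIndex := ⟨by
    rw [index_comap_of_surjective K hg]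
    exact hK.index_ne_zero⟩
  have := g.finite_ker_subgroupComap K
  have := finite_derivedSeries_of_finite_ker (g.subgroupComap K) hKm
  exact (virtDerivedLengthLE_succ_of_finite_derivedSeries (G := K.comap g) m).of_finiteIndex

end

theorem virtually_solvable_extension_of_finite_kernel_general {N G H : Type*}
    [Group N] [Group G] [Group H] [Finite N]
    (f : N →* G) (g : G →* H) (hg : Function.Surjective g)
    (hexact : g.ker = f.range)
    (m : ℕ) (hH : ∃ K : Subgroup H, K.FiniteIndex ∧ derivedSeries K m = ⊥) :
    ∃ K : Subgroup G, K.FiniteIndex ∧ derivedSeries K (m + 1) = ⊥ := by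
  have : Finite g.ker := hexact ▸ Finite.of_surjective _ f.rangeRestrict_surjective
  exact VirtDerivedLengthLE.of_surjective_of_finite_ker hg hH

/-- Let `1 → N → G → H → 1` be a short exact sequence of groups.  If `N` is finite and
`H` is virtually solvable (with a finite-index subgroup of derived length at most `m`),
then `G` is virtually solvable with `ℓ_vir(G) ≤ ℓ_vir(H) + 1`. -/
theorem virtually_solvable_extension_of_finite_kernel {N G H : Type*}
    [Group N] [Group G] [Group H] [Finite N]
    (f : N →* G) (g : G →* H) (hf : Function.Injective f) (hg : Function.Surjective g)
    (hexact : g.ker = f.range)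
    (m : ℕ) (hH : ∃ K : Subgroup H, K.FiniteIndex ∧ derivedSeries K m = ⊥) :
    ∃ K : Subgroup G, K.FiniteIndex ∧ derivedSeries K (m + 1) = ⊥ :=
  virtually_solvable_extension_of_finite_kernel_general f g hg hexact m hH
end

section
/- Let 1 → N → G → H → 1 be a short exact sequence of groups. If both N and H satisfy the Tits alternative, then G satisfies the Tits alternative. -/
/-- A group is *virtually solvable* if it contains a solvable subgroup of finite index. -/
def VirtuallySolvable (G : Type*) [Group G] : Prop :=
  ∃ K : Subgroup G, K.FiniteIndex ∧ IsSolvable K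

/-- A group `G` satisfies the *Tits alternative* if every subgroup of `G` either contains
a subgroup isomorphic to the non-abelian free group of rank 2 or is virtually solvable. -/
def SatisfiesTitsAlternative (G : Type*) [Group G] : Prop :=
  ∀ H : Subgroup G, (∃ φ : FreeGroup (Fin 2) →* H, Function.Injective φ) ∨ VirtuallySolvable H

/-!
Virtual solvability is closed under extensions. A virtually solvable group has a characteristic
solvable subgroup `R` of finite index: a normal solvable subgroup of finite index and minimal
index absorbs all its automorphic images. If `p : G →* Q` has virtually solvable kernel, the copy
of `R` inside `ker p` is therefore normal in `G`, and modulo it `p` has finite kernel. The kernel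
of the conjugation action on a finite normal subgroup has finite index and centralises it, so
there the kernel of `p` is abelian; and a solvable-by-virtually-solvable group is virtually
solvable.

For a subgroup `K` of `G`, a free subgroup of `g(K)` lifts to `K` since free groups are
projective, a free subgroup of `f⁻¹(K)` maps injectively into `K`, and otherwise `K` is an
extension of `K ∩ f(N)`, a quotient of `f⁻¹(K)`, by `g(K)`.
-/

theorem Subgroup.isSolvable_sup {G : Type*} [Group G] (U V : Subgroup G) [U.Normal]
    [Group.IsSolvable U] [Group.IsSolvable V] : Group.IsSolvable ↥(U ⊔ V) := by
  have hmap : (U ⊔ V).map (QuotientGroup.mk' U) = V.map (QuotientGroup.mk' U) := by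
    rw [Subgroup.map_sup, (Subgroup.map_eq_bot_iff _).mpr (QuotientGroup.ker_mk' U).ge, bot_sup_eq]
  have : Group.IsSolvable ((U ⊔ V).map (QuotientGroup.mk' U)) :=
    hmap ▸ Group.isSolvable_of_surjective ((QuotientGroup.mk' U).subgroupMap_surjective V)
  refine Group.isSolvable_of_ker_le_range (Subgroup.inclusion le_sup_left)
    ((QuotientGroup.mk' U).subgroupMap (U ⊔ V)) fun x hx => ?_
  have hxU : (x : G) ∈ U := (QuotientGroup.eq_one_iff _).mp (congrArg Subtype.val hx)
  exact ⟨⟨x, hxU⟩, rfl⟩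

theorem Subgroup.FiniteIndex.map_of_surjective {G Q : Type*} [Group G] [Group Q] {S : Subgroup G}
    (hS : S.FiniteIndex) {p : G →* Q} (hp : Function.Surjective p) : (S.map p).FiniteIndex :=
  ⟨fun h => hS.index_ne_zero (Nat.eq_zero_of_zero_dvd (h ▸ Subgroup.index_map_dvd S hp))⟩

theorem FreeGroup.exists_lift_of_surjective {α G Q : Type*} [Group G] [Group Q] {p : G →* Q}
    (hp : Function.Surjective p) (φ : FreeGroup α →* Q) :
    ∃ ψ : FreeGroup α →* G, p.comp ψ = φ :=
  ⟨FreeGroup.lift fun a => (hp (φ (.of a))).choose,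
    FreeGroup.ext_hom _ _ fun a => by simp [(hp (φ (.of a))).choose_spec]⟩

theorem MonoidHom.ker_subgroupMap_eq_range_subgroupComap {N G H : Type*} [Group N] [Group G]
    [Group H] {f : N →* G} {g : G →* H} (hexact : g.ker = f.range) (K : Subgroup G) :
    (g.subgroupMap K).ker = (f.subgroupComap K).range := by
  ext ⟨x, hx⟩
  rw [Subgroup.ker_subgroupMap, hexact, Subgroup.mem_subgroupOf, MonoidHom.mem_range,
    MonoidHom.mem_range]
  constructor
  · rintro ⟨n, hn⟩
    exact ⟨⟨n, Subgroup.mem_comap.mpr (hn ▸ hx)⟩, Subtype.ext hn⟩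
  · rintro ⟨n, hn⟩
    exact ⟨n, congrArg Subtype.val hn⟩

theorem MonoidHom.subgroupComap_injective {G Q : Type*} [Group G] [Group Q] {p : G →* Q}
    (hp : Function.Injective p) (K : Subgroup Q) : Function.Injective (p.subgroupComap K) :=
  fun _ _ h => Subtype.ext (hp (congrArg Subtype.val h))

namespace VirtuallySolvable

variable {G Q : Type*} [Group G] [Group Q]

theorem of_surjective {p : G →* Q} (hp : Function.Surjective p) (hG : VirtuallySolvable G) :
    VirtuallySolvable Q := by
  obtain ⟨S, hS, hSsolv⟩ := hG
  have : Group.IsSolvable S := hSsolv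
  exact ⟨S.map p, hS.map_of_surjective hp,
    Group.isSolvable_of_surjective (p.subgroupMap_surjective S)⟩

theorem of_finiteIndex (K : Subgroup G) [K.FiniteIndex] (hK : VirtuallySolvable K) :
    VirtuallySolvable G := by
  obtain ⟨S, hS, hSsolv⟩ := hK
  have : Group.IsSolvable S := hSsolv
  refine ⟨S.map K.subtype, ⟨?_⟩,
    Group.isSolvable_of_surjective (K.subtype.subgroupMap_surjective S)⟩
  rw [Subgroup.index_map_subtype]
  exact mul_ne_zero hS.index_ne_zero Subgroup.FiniteIndex.index_ne_zero

theorem of_isSolvable_ker (p : G →* Q) [Group.IsSolvable p.ker] (hQ : VirtuallySolvable Q) :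
    VirtuallySolvable G := by
  obtain ⟨L, hL, hLsolv⟩ := hQ
  have : Group.IsSolvable L := hLsolv
  refine ⟨L.comap p, ⟨?_⟩, ?_⟩
  · rw [Subgroup.index_comap]
    exact (Subgroup.isFiniteRelIndex_of_finiteIndex (K := p.range)).relIndex_ne_zero
  · refine Group.isSolvable_of_ker_le_range (Subgroup.inclusion (p.ker_le_comap L))
      (p.subgroupComap L) fun x hx => ?_
    have hxker : (x : G) ∈ p.ker := congrArg Subtype.val hx
    exact ⟨⟨x, hxker⟩, rfl⟩

theorem of_finite_ker (p : G →* Q) [Finite p.ker] (hQ : VirtuallySolvable Q) :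
    VirtuallySolvable G := by
  let D := (MulAut.conjNormal : G →* MulAut p.ker).ker
  have : D.FiniteIndex := Subgroup.finiteIndex_ker _
  have hcentral : ∀ d ∈ D, ∀ a ∈ p.ker, d * a * d⁻¹ = a := fun d hd a ha => by
    simpa [MulAut.conjNormal_apply] using
      congrArg (fun e : MulAut p.ker => ((e ⟨a, ha⟩ : p.ker) : G)) (MonoidHom.mem_ker.mp hd)
  have : Group.IsSolvable (p.comp D.subtype).ker := Group.isSolvable_of_comm fun x y =>
    Subtype.ext <| Subtype.ext (mul_inv_eq_iff_eq_mul.mp (hcentral _ y.1.2 _ x.2)).symm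
  exact of_finiteIndex D (of_isSolvable_ker (p.comp D.subtype) hQ)

theorem exists_characteristic_isSolvable_finiteIndex (hG : VirtuallySolvable G) :
    ∃ R : Subgroup G, R.Characteristic ∧ Group.IsSolvable R ∧ R.FiniteIndex := by
  let 𝒮 : Set (Subgroup G) := {V | V.Normal ∧ Group.IsSolvable V ∧ V.FiniteIndex}
  have h𝒮 : 𝒮.Nonempty := by
    obtain ⟨S, hS, hSsolv⟩ := hG
    have : Group.IsSolvable S := hSsolv
    exact ⟨S.normalCore, inferInstance,
      Group.isSolvable_of_isSolvable_injective (Subgroup.inclusion_injective S.normalCore_le),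
      inferInstance⟩
  obtain ⟨R, ⟨hRn, hRs, hRf⟩, hmin⟩ := (measure Subgroup.index).wf.has_min 𝒮 h𝒮
  refine ⟨R, Subgroup.characteristic_iff_map_le.mpr fun φ => ?_, hRs, hRf⟩
  let W := R.map φ.toMonoidHom
  have : W.Normal := hRn.map _ φ.surjective
  have : Group.IsSolvable W :=
    Group.isSolvable_of_surjective (φ.toMonoidHom.subgroupMap_surjective R)
  have hsup : R ⊔ W ∈ 𝒮 :=
    ⟨Subgroup.sup_normal R W, Subgroup.isSolvable_sup R W,
      Subgroup.finiteIndex_of_le le_sup_left⟩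
  have hRW : R = R ⊔ W := eq_of_le_of_not_lt le_sup_left fun hlt =>
    hmin _ hsup (Subgroup.index_strictAnti hlt)
  exact le_sup_right.trans hRW.ge

theorem of_ker (p : G →* Q) (hker : VirtuallySolvable p.ker) (hQ : VirtuallySolvable Q) :
    VirtuallySolvable G := by
  obtain ⟨R, hRchar, hRsolv, hRfin⟩ := hker.exists_characteristic_isSolvable_finiteIndex
  -- normal in `G`, being characteristic in the normal subgroup `ker p`
  let T := R.map p.ker.subtype
  have hT : T ≤ p.ker := Subgroup.map_subtype_le R
  have : Group.IsSolvable (QuotientGroup.mk' T).ker := by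
    rw [QuotientGroup.ker_mk']
    exact Group.isSolvable_of_surjective (p.ker.subtype.subgroupMap_surjective R)
  have : Finite (QuotientGroup.lift T p hT).ker := by
    let ψ := (QuotientGroup.mk' T).comp p.ker.subtype
    have hψ : ψ.ker = R := by
      rw [← MonoidHom.comap_ker, QuotientGroup.ker_mk']
      exact Subgroup.comap_map_eq_self_of_injective p.ker.subtype_injective R
    have hrange : ψ.range = p.ker.map (QuotientGroup.mk' T) := by
      rw [MonoidHom.range_comp, Subgroup.range_subtype]
    rw [QuotientGroup.ker_lift, ← hrange]
    refine Nat.finite_of_card_ne_zero ?_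
    rw [← Subgroup.index_ker, hψ]
    exact hRfin.index_ne_zero
  exact of_isSolvable_ker (QuotientGroup.mk' T) (of_finite_ker (QuotientGroup.lift T p hT) hQ)

end VirtuallySolvable

theorem titsAlternative_of_exact_general {N G H : Type*} [Group N] [Group G] [Group H]
    (f : N →* G) (g : G →* H) (hf : Function.Injective f)
    (hexact : g.ker = f.range)
    (hN : SatisfiesTitsAlternative N) (hH : SatisfiesTitsAlternative H) :
    SatisfiesTitsAlternative G := by
  intro K
  rcases hH (K.map g) with ⟨φ, hφ⟩ | himage
  · obtain ⟨ψ, hψ⟩ := FreeGroup.exists_lift_of_surjective (g.subgroupMap_surjective K) φ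
    refine .inl ⟨ψ, Function.Injective.of_comp (f := g.subgroupMap K) ?_⟩
    rwa [← MonoidHom.coe_comp, hψ]
  rcases hN (K.comap f) with ⟨φ, hφ⟩ | hpreimage
  · exact .inl ⟨(f.subgroupComap K).comp φ, (MonoidHom.subgroupComap_injective hf K).comp hφ⟩
  refine .inr (VirtuallySolvable.of_ker (g.subgroupMap K) ?_ himage)
  rw [MonoidHom.ker_subgroupMap_eq_range_subgroupComap hexact]
  exact hpreimage.of_surjective (f.subgroupComap K).rangeRestrict_surjective

/-- Let `1 → N → G → H → 1` be a short exact sequence of groups.  If both `N` and `H`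
satisfy the Tits alternative, then so does `G`. -/
theorem titsAlternative_of_exact {N G H : Type*} [Group N] [Group G] [Group H]
    (f : N →* G) (g : G →* H) (hf : Function.Injective f) (hg : Function.Surjective g)
    (hexact : g.ker = f.range)
    (hN : SatisfiesTitsAlternative N) (hH : SatisfiesTitsAlternative H) :
    SatisfiesTitsAlternative G :=
  titsAlternative_of_exact_general f g hf hexact hN hH
end

section
/- Let u be a biholomorphic automorphism of W = ℍ × ℂ, where ℍ is the upper half-plane. Then the first coordinate of u(w,z) depends only on w; more precisely, u(w,z) = (s(w), t(w,z)) where s(w) = (aw + b)/(cw + d) for some real numbers a, b, c, d with ad − bc > 0, and t : W → ℂ is holomorphic. -/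
/-!
On a complex line `{w} × ℂ` the first coordinate of `u` is an entire function with values in the
upper half-plane; after the Cayley transform it is bounded, hence constant by Liouville. So
`(u (w, z)).1 = s w` with `s w = (u (w, 0)).1`, likewise for `v`, and `v ∘ u = id` makes `s` a
holomorphic self-map of the upper half-plane with a holomorphic left inverse. After a real affine
change of coordinates `s` fixes `i`; conjugated by the Cayley transform it becomes a self-map of the
unit disc fixing `0` whose derivative at `0` has modulus one (Schwarz's lemma for it and for its
left inverse), hence a rotation `z ↦ ζ ^ 2 * z`, the Cayley conjugate of the real Möbius map
`w ↦ (a * w + b) / (-b * w + a)` with `ζ = a + b * i`.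
-/

open Complex

/-- `W = ℍ × ℂ`, realised as the open subset of `ℂ × ℂ` of pairs whose first coordinate
has positive imaginary part. -/
def W : Set (ℂ × ℂ) := {p | 0 < p.1.im}

open Metric Set Topology

def upperHalfPlaneSet : Set ℂ := {w | 0 < w.im}

local notation "ℍ" => upperHalfPlaneSet

noncomputable def cayley (w : ℂ) : ℂ := (w - I) / (w + I)

noncomputable def cayleyInv (z : ℂ) : ℂ := I * (1 + z) / (1 - z)

lemma add_I_ne_zero {w : ℂ} (hw : 0 < w.im) : w + I ≠ 0 := by
  intro h
  have := congrArg im h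
  simp only [add_im, I_im, zero_im] at this
  linarith

lemma one_sub_ne_zero_of_norm_lt_one {z : ℂ} (hz : ‖z‖ < 1) : 1 - z ≠ 0 := by
  rw [sub_ne_zero]
  rintro rfl
  simp at hz

lemma norm_cayley_lt_one {w : ℂ} (hw : 0 < w.im) : ‖cayley w‖ < 1 := by
  have hlt : normSq (w - I) < normSq (w + I) := by
    simp only [normSq_apply, sub_re, sub_im, add_re, add_im, I_re, I_im]
    nlinarith
  rw [cayley, norm_div, div_lt_one (norm_pos_iff.mpr (add_I_ne_zero hw)), ← sq_lt_sq₀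
    (norm_nonneg _) (norm_nonneg _), ← normSq_eq_norm_sq, ← normSq_eq_norm_sq]
  exact hlt

lemma im_cayleyInv_pos {z : ℂ} (hz : ‖z‖ < 1) : 0 < (cayleyInv z).im := by
  have hsq : normSq z < 1 := by
    rw [normSq_eq_norm_sq]
    nlinarith [norm_nonneg z]
  rw [cayleyInv, div_im, ← sub_div]
  apply div_pos _ (normSq_pos.mpr (one_sub_ne_zero_of_norm_lt_one hz))
  simp only [normSq_apply] at hsq
  simp only [mul_re, mul_im, add_re, add_im, sub_re, sub_im, I_re, I_im, one_re, one_im]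
  nlinarith

lemma cayleyInv_cayley {w : ℂ} (hw : 0 < w.im) : cayleyInv (cayley w) = w := by
  have hw' := add_I_ne_zero hw
  have hden := one_sub_ne_zero_of_norm_lt_one (norm_cayley_lt_one hw)
  rw [cayley] at hden ⊢
  rw [cayleyInv, div_eq_iff hden]
  field_simp
  ring

lemma cayley_cayleyInv {z : ℂ} (hz : ‖z‖ < 1) : cayley (cayleyInv z) = z := by
  have hz' := one_sub_ne_zero_of_norm_lt_one hz
  have hden := add_I_ne_zero (im_cayleyInv_pos hz)
  rw [cayleyInv] at hden ⊢
  rw [cayley, div_eq_iff hden]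
  field_simp
  ring

lemma mapsTo_cayley : MapsTo cayley ℍ (ball 0 1) := fun _ hw => by
  simpa using norm_cayley_lt_one hw

lemma mapsTo_cayleyInv : MapsTo cayleyInv (ball 0 1) ℍ := fun _ hz =>
  im_cayleyInv_pos (by simpa using hz)

lemma differentiableOn_cayley : DifferentiableOn ℂ cayley ℍ :=
  ((differentiable_id.sub_const I).differentiableOn).div
    ((differentiable_id.add_const I).differentiableOn) fun _ hw => add_I_ne_zero hw

lemma differentiableOn_cayleyInv : DifferentiableOn ℂ cayleyInv (ball 0 1) :=
  (((differentiable_const 1).add differentiable_id).const_mul I).differentiableOn.div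
    ((differentiable_const 1).sub differentiable_id).differentiableOn fun _ hz =>
      one_sub_ne_zero_of_norm_lt_one (by simpa using hz)

lemma ofReal_mul_add_ofReal_ne_zero {c d : ℝ} (hcd : c ≠ 0 ∨ d ≠ 0) {w : ℂ} (hw : 0 < w.im) :
    (c : ℂ) * w + d ≠ 0 := by
  intro h
  have him := congrArg im h
  have hre := congrArg re h
  simp only [add_im, mul_im, add_re, mul_re, ofReal_re, ofReal_im, zero_re, zero_im, zero_mul,
    add_zero, sub_zero] at him hre
  have hc : c = 0 := by nlinarith
  subst hc
  simp only [zero_mul, zero_add] at hre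
  tauto

lemma cayleyInv_sq_mul_cayley {ζ : ℂ} (hζ : ‖ζ‖ = 1) {w : ℂ} (hw : 0 < w.im) :
    cayleyInv (ζ ^ 2 * cayley w) = (ζ.re * w + ζ.im) / (-ζ.im * w + ζ.re) := by
  set a := ζ.re
  set b := ζ.im
  have hab : a ^ 2 + b ^ 2 = 1 := by
    have h := normSq_eq_norm_sq ζ
    rw [hζ, normSq_apply] at h
    linear_combination h
  have habC : (a : ℂ) ^ 2 + (b : ℂ) ^ 2 = 1 := by exact_mod_cast hab
  have hζab : ζ = a + b * I := (re_add_im ζ).symm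
  have hden : -(b : ℂ) * w + a ≠ 0 := by
    have hba : -b ≠ 0 ∨ a ≠ 0 := by
      by_contra! h
      nlinarith [h.1, h.2]
    exact_mod_cast ofReal_mul_add_ofReal_ne_zero hba hw
  -- With `ζ * conj ζ = 1`, `w + I ± ζ ^ 2 * (w - I) = ζ * (conj ζ * (w + I) ± ζ * (w - I))`.
  have hnum : (w + I) + ζ ^ 2 * (w - I) = 2 * ζ * (a * w + b) := by
    rw [hζab]
    linear_combination (-(w + I)) * habC + (b ^ 2 * w - 2 * a * b - b ^ 2 * I) * I_sq
  have hdiff : (w + I) - ζ ^ 2 * (w - I) = 2 * I * ζ * (a - b * w) := by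
    rw [hζab]
    linear_combination (-(w + I)) * habC + (b ^ 2 * w + b ^ 2 * I) * I_sq
  have hden' := one_sub_ne_zero_of_norm_lt_one (z := ζ ^ 2 * cayley w) (by
    rw [norm_mul, norm_pow, hζ, one_pow, one_mul]; exact norm_cayley_lt_one hw)
  rw [cayleyInv, div_eq_div_iff hden' hden, cayley]
  field_simp [add_I_ne_zero hw]
  linear_combination I * (a - b * w) * hnum - (a * w + b) * hdiff

lemma Differentiable.apply_eq_apply_of_im_pos {E : Type*} [NormedAddCommGroup E]
    [NormedSpace ℂ E] {f : E → ℂ} (hf : Differentiable ℂ f) (him : ∀ x, 0 < (f x).im) (x y : E) :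
    f x = f y := by
  have hmaps : MapsTo f univ ℍ := fun x _ => him x
  have hg : Differentiable ℂ (cayley ∘ f) :=
    differentiableOn_univ.mp (differentiableOn_cayley.comp hf.differentiableOn hmaps)
  have hbdd : Bornology.IsBounded (range (cayley ∘ f)) :=
    isBounded_ball.subset (range_subset_iff.mpr fun x => mapsTo_cayley (him x))
  rw [← cayleyInv_cayley (him x), ← cayleyInv_cayley (him y)]
  exact congrArg cayleyInv (hg.apply_eq_apply_of_bounded hbdd x y)

lemma exists_eq_mul_of_leftInvOn_ball {F G : ℂ → ℂ} (hF : DifferentiableOn ℂ F (ball 0 1))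
    (hG : DifferentiableOn ℂ G (ball 0 1)) (hFm : MapsTo F (ball 0 1) (ball 0 1))
    (hGm : MapsTo G (ball 0 1) (ball 0 1)) (hF0 : F 0 = 0) (hGF : LeftInvOn G F (ball 0 1)) :
    ∃ μ : ℂ, ‖μ‖ = 1 ∧ EqOn F (μ * ·) (ball 0 1) := by
  have h0 : (0 : ℂ) ∈ ball (0 : ℂ) 1 := mem_ball_self one_pos
  have hG0 : G 0 = 0 := by simpa [hF0] using hGF h0
  have hFm' : MapsTo F (ball 0 1) (closedBall (F 0) 1) := by
    rw [hF0]; exact hFm.mono_right ball_subset_closedBall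
  have hGm' : MapsTo G (ball 0 1) (closedBall (G 0) 1) := by
    rw [hG0]; exact hGm.mono_right ball_subset_closedBall
  have hchain : deriv G 0 * deriv F 0 = 1 := by
    have hFd : DifferentiableAt ℂ F 0 := hF.differentiableAt (isOpen_ball.mem_nhds h0)
    have hGd : DifferentiableAt ℂ G (F 0) := by
      rw [hF0]; exact hG.differentiableAt (isOpen_ball.mem_nhds h0)
    have hid : G ∘ F =ᶠ[𝓝 0] id := Filter.eventuallyEq_of_mem (isOpen_ball.mem_nhds h0) hGF
    calc deriv G 0 * deriv F 0 = deriv (G ∘ F) 0 := by rw [deriv_comp _ hGd hFd, hF0]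
      _ = 1 := by rw [hid.deriv_eq, deriv_id]
  have hFle := norm_deriv_le_one_of_mapsTo_ball hF hFm' one_pos
  have hGle := norm_deriv_le_one_of_mapsTo_ball hG hGm' one_pos
  have hnorm : ‖deriv F 0‖ = 1 := by
    have h := congrArg norm hchain
    rw [norm_mul, norm_one] at h
    nlinarith [norm_nonneg (deriv F 0), norm_nonneg (deriv G 0)]
  have hslope : ‖dslope F 0 0‖ = 1 / 1 := by rw [dslope_same, hnorm, div_one]
  refine ⟨deriv F 0, hnorm, fun z hz => ?_⟩
  rw [affine_of_mapsTo_ball_of_norm_dslope_eq_div hF hFm' h0 hslope hz, dslope_same, hF0]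
  simp [mul_comm]

def IsRealMoebius (f : ℂ → ℂ) : Prop :=
  ∃ a b c d : ℝ, 0 < a * d - b * c ∧ ∀ w ∈ ℍ, f w = (a * w + b) / (c * w + d)

lemma IsRealMoebius.const_mul_add {f : ℂ → ℂ} (hf : IsRealMoebius f) {y : ℝ} (hy : 0 < y)
    (x : ℝ) : IsRealMoebius fun w => y * f w + x := by
  obtain ⟨a, b, c, d, hdet, hf⟩ := hf
  have hcd : c ≠ 0 ∨ d ≠ 0 := by
    by_contra! h
    simp [h.1, h.2] at hdet
  refine ⟨y * a + x * c, y * b + x * d, c, d, by nlinarith, fun w hw => ?_⟩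
  have hden := ofReal_mul_add_ofReal_ne_zero hcd hw
  show (y : ℂ) * f w + x = _
  rw [hf w hw, mul_div_assoc', div_add' _ _ _ hden]
  push_cast
  ring

lemma isRealMoebius_of_leftInvOn_of_apply_I {f g : ℂ → ℂ} (hf : DifferentiableOn ℂ f ℍ)
    (hg : DifferentiableOn ℂ g ℍ) (hfm : MapsTo f ℍ ℍ) (hgm : MapsTo g ℍ ℍ)
    (hgf : LeftInvOn g f ℍ) (hfI : f I = I) : IsRealMoebius f := by
  set F := cayley ∘ f ∘ cayleyInv
  have hF : DifferentiableOn ℂ F (ball 0 1) := differentiableOn_cayley.comp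
    (hf.comp differentiableOn_cayleyInv mapsTo_cayleyInv) (hfm.comp mapsTo_cayleyInv)
  have hG : DifferentiableOn ℂ (cayley ∘ g ∘ cayleyInv) (ball 0 1) := differentiableOn_cayley.comp
    (hg.comp differentiableOn_cayleyInv mapsTo_cayleyInv) (hgm.comp mapsTo_cayleyInv)
  have hF0 : F 0 = 0 := by simp [F, cayleyInv, cayley, hfI]
  have hGF : LeftInvOn (cayley ∘ g ∘ cayleyInv) F (ball 0 1) := fun z hz => by
    simp only [F, Function.comp_apply, cayleyInv_cayley (hfm (mapsTo_cayleyInv hz)),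
      hgf (mapsTo_cayleyInv hz), cayley_cayleyInv (mem_ball_zero_iff.mp hz)]
  obtain ⟨μ, hμ, hFμ⟩ := exists_eq_mul_of_leftInvOn_ball hF hG
    (mapsTo_cayley.comp (hfm.comp mapsTo_cayleyInv))
    (mapsTo_cayley.comp (hgm.comp mapsTo_cayleyInv)) hF0 hGF
  obtain ⟨ζ, rfl⟩ := IsAlgClosed.exists_eq_mul_self μ
  have hζ : ‖ζ‖ = 1 := by
    rw [norm_mul, ← sq] at hμ
    exact (pow_eq_one_iff_of_nonneg (norm_nonneg ζ) two_ne_zero).mp hμ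
  have hdet : 0 < ζ.re * ζ.re - ζ.im * -ζ.im := by
    have h := normSq_eq_norm_sq ζ
    rw [hζ, normSq_apply] at h
    linarith
  refine ⟨ζ.re, ζ.im, -ζ.im, ζ.re, hdet, fun w hw => ?_⟩
  have hFw : F (cayley w) = cayley (f w) := by simp [F, cayleyInv_cayley hw]
  rw [← cayleyInv_cayley (hfm hw), ← hFw, hFμ (mapsTo_cayley hw), ← sq,
    cayleyInv_sq_mul_cayley hζ hw]
  push_cast
  rfl

theorem isRealMoebius_of_leftInvOn {f g : ℂ → ℂ} (hf : DifferentiableOn ℂ f ℍ)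
    (hg : DifferentiableOn ℂ g ℍ) (hfm : MapsTo f ℍ ℍ) (hgm : MapsTo g ℍ ℍ)
    (hgf : LeftInvOn g f ℍ) : IsRealMoebius f := by
  set x := (f I).re
  set y := (f I).im
  have hy : 0 < y := hfm (by simp [upperHalfPlaneSet])
  have hyC : (y : ℂ) ≠ 0 := ofReal_ne_zero.mpr hy.ne'
  have haff : MapsTo (fun w : ℂ => y * w + x) ℍ ℍ := fun w hw => by
    simp only [upperHalfPlaneSet, mem_ofPred_eq, add_im, mul_im, ofReal_re, ofReal_im, zero_mul,
      add_zero]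
    exact mul_pos hy hw
  have ht : IsRealMoebius fun w => (f w - x) / y := by
    apply isRealMoebius_of_leftInvOn_of_apply_I ((hf.sub_const _).div_const _)
      (hg.comp ((differentiableOn_id.const_mul _).add_const _) haff)
      (fun w hw => by simpa [upperHalfPlaneSet] using div_pos (hfm hw) hy) (hgm.comp haff)
    · intro w hw
      simp only [Function.comp_apply]
      rw [mul_div_cancel₀ _ hyC, sub_add_cancel, hgf hw]
    · rw [div_eq_iff hyC, sub_eq_iff_eq_add, ← re_add_im (f I)]
      ring
  convert ht.const_mul_add hy x using 1
  funext w
  rw [mul_div_cancel₀ _ hyC, sub_add_cancel]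

lemma fst_apply_eq_fst_apply_mk_zero {u : ℂ × ℂ → ℂ × ℂ} (hu : DifferentiableOn ℂ u W)
    (hmaps : MapsTo u W W) {p : ℂ × ℂ} (hp : p ∈ W) : (u p).1 = (u (p.1, 0)).1 := by
  have hline : MapsTo (fun z : ℂ => (p.1, z)) univ W := fun _ _ => hp
  have hf : Differentiable ℂ fun z => (u (p.1, z)).1 := differentiableOn_univ.mp
    (hu.fst.comp ((differentiableOn_const _).prodMk differentiableOn_id) hline)
  exact hf.apply_eq_apply_of_im_pos (fun z => hmaps (hline (mem_univ z))) p.2 0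

lemma differentiableOn_fst_apply_mk_zero {u : ℂ × ℂ → ℂ × ℂ} (hu : DifferentiableOn ℂ u W) :
    DifferentiableOn ℂ (fun w => (u (w, 0)).1) ℍ :=
  hu.fst.comp (differentiableOn_id.prodMk (differentiableOn_const 0)) fun _ hw => hw

theorem automorphism_of_upperHalfPlane_prod_plane_general
    (u v : ℂ × ℂ → ℂ × ℂ)
    (hu : DifferentiableOn ℂ u W) (hv : DifferentiableOn ℂ v W)
    (humaps : Set.MapsTo u W W) (hvmaps : Set.MapsTo v W W)
    (hvu : ∀ p ∈ W, v (u p) = p) :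
    (∃ a b c d : ℝ, a * d - b * c > 0 ∧
      ∀ p ∈ W, (u p).1 = ((a : ℂ) * p.1 + (b : ℂ)) / ((c : ℂ) * p.1 + (d : ℂ))) ∧
    DifferentiableOn ℂ (fun p => (u p).2) W := by
  have hs : IsRealMoebius fun w => (u (w, 0)).1 := by
    refine isRealMoebius_of_leftInvOn (differentiableOn_fst_apply_mk_zero hu)
      (differentiableOn_fst_apply_mk_zero hv) (fun _ hw => humaps hw) (fun _ hw => hvmaps hw)
      fun w hw => ?_
    have hW : ((w, 0) : ℂ × ℂ) ∈ W := hw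
    rw [← fst_apply_eq_fst_apply_mk_zero hv hvmaps (humaps hW), hvu _ hW]
  obtain ⟨a, b, c, d, hdet, hs⟩ := hs
  exact ⟨⟨a, b, c, d, hdet, fun p hp =>
    (fst_apply_eq_fst_apply_mk_zero hu humaps hp).trans (hs _ hp)⟩, hu.snd⟩

/-- Every biholomorphic automorphism `u` of `W = ℍ × ℂ` has the form
`u(w,z) = (s(w), t(w,z))` where `s(w) = (aw+b)/(cw+d)` with `a, b, c, d` real and
`ad - bc > 0`, and `t` (the second coordinate of `u`) is holomorphic. -/
theorem automorphism_of_upperHalfPlane_prod_plane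
    (u v : ℂ × ℂ → ℂ × ℂ)
    (hu : DifferentiableOn ℂ u W) (hv : DifferentiableOn ℂ v W)
    (humaps : Set.MapsTo u W W) (hvmaps : Set.MapsTo v W W)
    (hvu : ∀ p ∈ W, v (u p) = p) (huv : ∀ p ∈ W, u (v p) = p) :
    (∃ a b c d : ℝ, a * d - b * c > 0 ∧
      ∀ p ∈ W, (u p).1 = ((a : ℂ) * p.1 + (b : ℂ)) / ((c : ℂ) * p.1 + (d : ℂ))) ∧
    DifferentiableOn ℂ (fun p => (u p).2) W :=
  automorphism_of_upperHalfPlane_prod_plane_general u v hu hv humaps hvmaps hvu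
end

section
/- Let M ∈ SL_3(ℤ) be a matrix whose eigenvalues are α, β, β̄, where α > 1 is real and β is non-real. Let Γ be the centralizer of M in GL_3(ℤ), and let ⟨M⟩ ≅ ℤ be the (central) subgroup of Γ generated by M. Then the set of elements of finite order of the quotient group Γ/⟨M⟩ is finite. -/
/-!
Over `ℂ` the matrix `M` has the three distinct eigenvalues `α, β, β̄`, so in an eigenbasis `P`
of `M` every element `N` of the centralizer `Γ` becomes diagonal, `P⁻¹ N P = diag χ(N)`, with
`χ : Γ →* ℂ³` a homomorphism. If the class of `N` in `Γ/⟨M⟩` has finite order, then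
`N ^ n = M ^ k` with `n > 0`, hence `χᵢ(N) ^ n = λᵢ ^ k` for the eigenvalues `λᵢ` of `M`, and the
representative `N M^(-⌊k/n⌋)` of the same class has `|χᵢ| ≤ max 1 |λᵢ|`. Integer matrices that
`P` conjugates to diagonal matrices with bounded entries have bounded entries themselves, so
there are only finitely many of them.
-/

open Matrix Polynomial

instance zpowers_subgroupOf_centralizer_normal {Γ : Type*} [Group Γ] (a : Γ) :
    ((Subgroup.zpowers a).subgroupOf (Subgroup.centralizer {a})).Normal := by
  constructor
  intro n hn g
  rw [Subgroup.mem_subgroupOf] at hn ⊢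
  obtain ⟨k, hk⟩ := Subgroup.mem_zpowers_iff.mp hn
  have hc : Commute a (g : Γ) :=
    Subgroup.mem_centralizer_iff.mp g.2 a (Set.mem_singleton a)
  refine Subgroup.mem_zpowers_iff.mpr ⟨k, ?_⟩
  push_cast
  rw [← hk]
  rw [← (hc.zpow_left k).eq, mul_assoc, mul_inv_cancel, mul_one]

theorem norm_mul_zpow_neg_ediv_le {𝕜 : Type*} [NormedDivisionRing 𝕜] {x c : 𝕜} (hc : c ≠ 0)
    {n : ℕ} (hn : 0 < n) {k : ℤ} (h : x ^ n = c ^ k) :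
    ‖x * c ^ (-(k / n))‖ ≤ max 1 ‖c‖ := by
  have hc₀ : ‖c‖ ≠ 0 := norm_ne_zero_iff.mpr hc
  have hpow : ‖x * c ^ (-(k / n))‖ ^ n = ‖c‖ ^ (k % n) := by
    rw [norm_mul, mul_pow, ← norm_pow, h, norm_zpow, norm_zpow, ← zpow_natCast,
      ← _root_.zpow_mul, ← zpow_add₀ hc₀, Int.emod_def]
    ring_nf
  have hrem : 0 ≤ k % n := Int.emod_nonneg k (by omega)
  have hbound : ‖c‖ ^ (k % n) ≤ max 1 ‖c‖ ^ n := calc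
    ‖c‖ ^ (k % n) ≤ max 1 ‖c‖ ^ (k % n) :=
      zpow_le_zpow_left₀ hrem (norm_nonneg c) (le_max_right 1 _)
    _ ≤ max 1 ‖c‖ ^ (n : ℤ) :=
      zpow_le_zpow_right₀ (le_max_left 1 _) (Int.emod_lt_of_pos k (by omega)).le
    _ = max 1 ‖c‖ ^ n := zpow_natCast _ _
  exact (pow_le_pow_iff_left₀ (norm_nonneg _) (by positivity) hn.ne').mp (hpow ▸ hbound)

theorem QuotientGroup.finite_setOf_isOfFinOrder {G : Type*} [Group G] (H : Subgroup G) [H.Normal]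
    {S : Set G} (hS : S.Finite)
    (h : ∀ g : G, ∀ n : ℕ, 0 < n → g ^ n ∈ H → ∃ a ∈ H, g * a ∈ S) :
    {x : G ⧸ H | IsOfFinOrder x}.Finite := by
  refine (hS.image (↑)).subset ?_
  intro x hx
  induction x using QuotientGroup.induction_on with | H g => ?_
  obtain ⟨n, hn, hgn⟩ := isOfFinOrder_iff_pow_eq_one.mp hx
  obtain ⟨a, ha, hS⟩ := h g n hn ((QuotientGroup.eq_one_iff _).mp hgn)
  exact ⟨g * a, hS, QuotientGroup.mk_mul_of_mem g ha⟩

theorem Complex.injective_ofReal_self_conj {a : ℝ} {b : ℂ} (hb : b.im ≠ 0) :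
    Function.Injective ![(a : ℂ), b, starRingEnd ℂ b] := by
  refine Function.Injective.of_comp (f := Complex.im) ?_
  intro i j hij
  fin_cases i <;> fin_cases j <;> simp at hij ⊢ <;> grind

namespace Matrix

variable {n : Type*} [Fintype n]

theorem eq_diagonal_of_commute_diagonal [DecidableEq n] {R : Type*} [CommRing R]
    [NoZeroDivisors R] {d : n → R} (hd : Function.Injective d) {D : Matrix n n R}
    (h : Commute D (diagonal d)) : D = diagonal fun i => D i i := by
  ext i j
  rcases eq_or_ne i j with rfl | hij
  · simp
  · have hDd : D i j * (d j - d i) = 0 := by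
      have := congrFun₂ h.eq i j
      simp only [mul_diagonal, diagonal_mul] at this
      linear_combination this
    rw [diagonal_apply_ne _ hij]
    exact (mul_eq_zero.mp hDd).resolve_right (sub_ne_zero.mpr (hd.ne hij.symm))

theorem exists_conj_eq_diagonal [DecidableEq n] {K : Type*} [Field K] (A : Matrix n n K)
    {ev : n → K} (hev : Function.Injective ev) (hroot : ∀ i, A.charpoly.IsRoot (ev i)) :
    ∃ P : GL n K, (↑P⁻¹ : Matrix n n K) * A * (P : Matrix n n K) = diagonal ev := by
  choose v hv using fun i =>
    ((Module.End.hasEigenvalue_iff_isRoot_charpoly A.mulVecLin (ev i)).mpr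
      (by simpa using hroot i)).exists_hasEigenvector
  set P : Matrix n n K := (of v)ᵀ
  have hP : IsUnit P := linearIndependent_cols_iff_isUnit.mp
    (Module.End.eigenvectors_linearIndependent' _ ev hev v hv)
  have hAP : A * P = P * diagonal ev := by
    ext i j
    rw [mul_diagonal]
    simpa [P, mul_apply, mulVec, dotProduct, mul_comm] using congrFun ((hv j).apply_eq_smul) i
  refine ⟨hP.unit, ?_⟩
  rw [mul_assoc, IsUnit.unit_spec, hAP, ← mul_assoc, hP.val_inv_mul, one_mul]

theorem exists_monoidHom_conj_eq_diagonal [DecidableEq n] {K G : Type*} [Field K] [Monoid G]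
    (ρ : G →* Matrix n n K) {A : Matrix n n K} {ev : n → K} (hev : Function.Injective ev)
    (hroot : ∀ i, A.charpoly.IsRoot (ev i)) (hcomm : ∀ g, Commute (ρ g) A) :
    ∃ (P : GL n K) (χ : G →* (n → K)),
      (↑P⁻¹ : Matrix n n K) * A * (P : Matrix n n K) = diagonal ev ∧
      ∀ g, (↑P⁻¹ : Matrix n n K) * ρ g * (P : Matrix n n K) = diagonal (χ g) := by
  obtain ⟨P, hP⟩ := exists_conj_eq_diagonal A hev hroot
  set conj : Matrix n n K →* Matrix n n K :=
    { toFun X := ↑P⁻¹ * X * ↑P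
      map_one' := by simp
      map_mul' X Y := by simp [mul_assoc] }
  have hdiag : ∀ g, conj (ρ g) = diagonal fun i => conj (ρ g) i i := fun g =>
    eq_diagonal_of_commute_diagonal hev (hP ▸ ((hcomm g).map conj))
  refine ⟨P, { toFun g i := conj (ρ g) i i, map_one' := ?_, map_mul' g h := ?_ }, hP, hdiag⟩
  · ext i; simp
  · ext i
    simp only [map_mul]
    rw [hdiag g, hdiag h]
    simp

section LinftyOpNorm

attribute [local instance] Matrix.linftyOpSeminormedAddCommGroup Matrix.linftyOpNormedRing

theorem norm_entry_le_linfty_opNorm {α : Type*} [SeminormedAddCommGroup α] (A : Matrix n n α)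
    (i j : n) : ‖A i j‖ ≤ ‖A‖ := by
  rw [linfty_opNorm_def]
  calc ‖A i j‖ ≤ ∑ j, ‖A i j‖₊ := by
        exact_mod_cast Finset.single_le_sum (f := fun j => ‖A i j‖₊) (by simp) (Finset.mem_univ _)
    _ ≤ _ := by exact_mod_cast Finset.le_sup (f := fun i => ∑ j, ‖A i j‖₊) (Finset.mem_univ _)

theorem finite_setOf_conj_map_intCast_eq_diagonal [DecidableEq n] {𝕜 : Type*} [RCLike 𝕜]
    (P : GL n 𝕜) (C : ℝ) :
    {N : Matrix n n ℤ | ∃ d : n → 𝕜, ‖d‖ ≤ C ∧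
      (↑P⁻¹ : Matrix n n 𝕜) * N.map (↑) * (P : Matrix n n 𝕜) = diagonal d}.Finite := by
  set R := ‖(P : Matrix n n 𝕜)‖ * C * ‖(↑P⁻¹ : Matrix n n 𝕜)‖
  refine (isCompact_closedBall (0 : n → n → ℤ) R).finite_of_discrete.subset ?_
  rintro (N : n → n → ℤ) ⟨d, hd, hN⟩
  have hC : 0 ≤ C := (norm_nonneg d).trans hd
  have hNP : Matrix.map N ((↑) : ℤ → 𝕜) =
      (P : Matrix n n 𝕜) * diagonal d * (↑P⁻¹ : Matrix n n 𝕜) := by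
    rw [← hN]; simp [mul_assoc]
  have hnorm : ‖Matrix.map N ((↑) : ℤ → 𝕜)‖ ≤ R := by
    rw [hNP]
    refine (norm_mul_le _ _).trans
      (mul_le_mul_of_nonneg_right ((norm_mul_le _ _).trans ?_) (norm_nonneg _))
    rw [linfty_opNorm_diagonal]
    exact mul_le_mul_of_nonneg_left hd (norm_nonneg _)
  rw [mem_closedBall_zero_iff, pi_norm_le_iff_of_nonneg (by positivity)]
  intro i
  rw [pi_norm_le_iff_of_nonneg (by positivity)]
  intro j
  have hentry := (norm_entry_le_linfty_opNorm _ i j).trans hnorm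
  change ‖((N i j : ℤ) : 𝕜)‖ ≤ R at hentry
  rwa [← RCLike.ofReal_intCast, RCLike.norm_ofReal, ← Int.norm_eq_abs] at hentry

end LinftyOpNorm

end Matrix

theorem finite_torsion_elements_of_centralizer_quotient_SL3_general
    (M : Matrix (Fin 3) (Fin 3) ℤ)
    (α : ℝ) (β : ℂ) (hβ : β.im ≠ 0)
    (hchar : M.charpoly.map (Int.castRingHom ℂ) =
      (X - C (α : ℂ)) * (X - C β) * (X - C ((starRingEnd ℂ) β)))
    (Mu : GL (Fin 3) ℤ) (hMu : (Mu : Matrix (Fin 3) (Fin 3) ℤ) = M) :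
    {x : ↥(Subgroup.centralizer {Mu}) ⧸
        (Subgroup.zpowers Mu).subgroupOf (Subgroup.centralizer {Mu}) |
      IsOfFinOrder x}.Finite := by
  set Γ := Subgroup.centralizer {Mu}
  let Mc : Γ := ⟨Mu, Subgroup.mem_centralizer_singleton_iff.mpr rfl⟩
  let ρ : Γ →* Matrix (Fin 3) (Fin 3) ℂ :=
    (Int.castRingHom ℂ).mapMatrix.toMonoidHom.comp ((Units.coeHom _).comp Γ.subtype)
  let ev : Fin 3 → ℂ := ![(α : ℂ), β, starRingEnd ℂ β]
  have hroot : ∀ i, (ρ Mc).charpoly.IsRoot (ev i) := by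
    have hρM : (ρ Mc).charpoly = M.charpoly.map (Int.castRingHom ℂ) := by
      rw [← hMu, ← charpoly_map]; rfl
    intro i
    fin_cases i <;> simp [hρM, hchar, ev]
  have hcomm : ∀ g, Commute (ρ g) (ρ Mc) := fun g =>
    (Commute.map (Subtype.ext (Subgroup.mem_centralizer_singleton_iff.mp g.2)) ρ)
  obtain ⟨P, χ, hM, hχ⟩ := exists_monoidHom_conj_eq_diagonal ρ
    (Complex.injective_ofReal_self_conj hβ) hroot hcomm
  have hχM : χ Mc = ev := diagonal_injective (by rw [← hM, hχ])
  have hev : ∀ i, ev i ≠ 0 := fun i => by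
    simpa [hχM] using (Pi.isUnit_iff.mp ((Group.isUnit Mc).map χ) i).ne_zero
  have hχℤ : ∀ y : Γ, (↑P⁻¹ : Matrix (Fin 3) (Fin 3) ℂ) *
      ((y : GL (Fin 3) ℤ) : Matrix (Fin 3) (Fin 3) ℤ).map (↑) * (P : Matrix (Fin 3) (Fin 3) ℂ) =
        diagonal (χ y) := hχ
  refine QuotientGroup.finite_setOf_isOfFinOrder _
    ((finite_setOf_conj_map_intCast_eq_diagonal P (max 1 ‖ev‖)).preimage
      (Units.val_injective.comp Subtype.val_injective).injOn) ?_
  intro g n hn hg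
  obtain ⟨k, hk⟩ := Subgroup.mem_zpowers_iff.mp (Subgroup.mem_subgroupOf.mp hg)
  have hgn : g ^ n = Mc ^ k := Subtype.ext (by simp [Mc, hk])
  refine ⟨Mc ^ (-(k / n)), Subgroup.mem_subgroupOf.mpr (by simp [Mc, zpow_mem]),
    χ (g * Mc ^ (-(k / n))), ?_, hχℤ _⟩
  refine (pi_norm_le_iff_of_nonneg (by positivity)).mpr fun i => ?_
  have hgi : χ g i ^ n = ev i ^ k := by simpa [hχM] using congrFun (congrArg χ hgn) i
  simpa [hχM] using (norm_mul_zpow_neg_ediv_le (hev i) hn hgi).trans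
    (max_le_max le_rfl (norm_le_pi_norm ev i))

/-- Let `M ∈ SL₃(ℤ)` have eigenvalues `α, β, β̄` with `α > 1` real and `β` non-real.
Let `Γ` be the centralizer of `M` in `GL₃(ℤ)` and `⟨M⟩` the cyclic subgroup generated
by `M`.  Then the set of elements of finite order of the quotient `Γ/⟨M⟩` is finite. -/
theorem finite_torsion_elements_of_centralizer_quotient_SL3
    (M : Matrix (Fin 3) (Fin 3) ℤ) (hdet : M.det = 1)
    (α : ℝ) (hα : 1 < α) (β : ℂ) (hβ : β.im ≠ 0)
    (hchar : M.charpoly.map (Int.castRingHom ℂ) =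
      (X - C (α : ℂ)) * (X - C β) * (X - C ((starRingEnd ℂ) β)))
    (Mu : GL (Fin 3) ℤ) (hMu : (Mu : Matrix (Fin 3) (Fin 3) ℤ) = M) :
    {x : ↥(Subgroup.centralizer {Mu}) ⧸
        (Subgroup.zpowers Mu).subgroupOf (Subgroup.centralizer {Mu}) |
      IsOfFinOrder x}.Finite :=
  finite_torsion_elements_of_centralizer_quotient_SL3_general M α β hβ hchar Mu hMu
end

section
/- Let M ∈ SL_2(ℤ) be a matrix with real eigenvalues α and 1/α where α > 1 (equivalently, |tr M| > 2 and det M = 1). Let Γ be the centralizer of M in GL_2(ℤ), and let ⟨M⟩ ≅ ℤ be the subgroup of Γ generated by M. Then the set of elements of finite order of the quotient group Γ/⟨M⟩ is finite. -/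
open Matrix Polynomial

lemma quad_finite (t d : ℝ) : ({x : ℝ | x^2 - t*x + d = 0}).Finite := by
  have hsub : {x : ℝ | x^2 - t*x + d = 0} ⊆
      {(t + Real.sqrt (t^2 - 4*d))/2, (t - Real.sqrt (t^2 - 4*d))/2} := by
    intro x hx
    simp only [Set.mem_setOf_eq] at hx
    have h1 : (2*x - t)^2 = t^2 - 4*d := by nlinarith [hx]
    have h0 : (0:ℝ) ≤ t^2 - 4*d := h1 ▸ sq_nonneg _
    have h2 : Real.sqrt (t^2-4*d) ^ 2 = t^2 - 4*d := Real.sq_sqrt h0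
    have h3 := sq_eq_sq_iff_eq_or_eq_neg.mp (h1.trans h2.symm)
    simp only [Set.mem_insert_iff, Set.mem_singleton_iff]
    rcases h3 with h | h
    · left; linarith
    · right; linarith
  exact ((Set.finite_singleton _).insert _).subset hsub

lemma aux_eig (A : Matrix (Fin 2) (Fin 2) ℝ) (r : ℝ) (hd : A.det = 1)
    (hr : r^2 - A.trace * r + 1 = 0) :
    A.mulVec ![A 0 1, r - A 0 0] = r • ![A 0 1, r - A 0 0] := by
  rw [Matrix.det_fin_two] at hd
  rw [Matrix.trace_fin_two] at hr
  funext i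
  fin_cases i <;>
    simp [Matrix.mulVec, dotProduct, Fin.sum_univ_two] <;> nlinarith [hd, hr]

lemma aux_scal (A B : Matrix (Fin 2) (Fin 2) ℝ) (r : ℝ) (hb : A 0 1 ≠ 0)
    (hd : A.det = 1) (hr : r^2 - A.trace * r + 1 = 0) (hcomm : A * B = B * A) :
    B.mulVec ![A 0 1, r - A 0 0] =
      ((B.mulVec ![A 0 1, r - A 0 0]) 0 / A 0 1) • ![A 0 1, r - A 0 0] := by
  set v : Fin 2 → ℝ := ![A 0 1, r - A 0 0] with hv
  have h1 : A.mulVec (B.mulVec v) = r • B.mulVec v := by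
    rw [Matrix.mulVec_mulVec, hcomm, ← Matrix.mulVec_mulVec, aux_eig A r hd hr,
      Matrix.mulVec_smul]
  set u : Fin 2 → ℝ := B.mulVec v with hu
  have h0 := congrFun h1 0
  simp [Matrix.mulVec, dotProduct, Fin.sum_univ_two] at h0
  funext i
  fin_cases i
  · simp [hv, div_mul_cancel₀ _ hb]
  · show u 1 = u 0 / A 0 1 * (r - A 0 0)
    field_simp
    nlinarith [h0]

lemma gamma_quot_finite (α : ℝ) (hα : 1 < α) (Mu : GL (Fin 2) ℤ)
    (A : Matrix (Fin 2) (Fin 2) ℝ)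
    (hA : A = ((Mu : Matrix (Fin 2) (Fin 2) ℤ)).map (Int.castRingHom ℝ))
    (hAdet : A.det = 1)
    (hroot : α^2 - A.trace * α + 1 = 0)
    (hrootβ : (α⁻¹)^2 - A.trace * α⁻¹ + 1 = 0)
    (hb : A 0 1 ≠ 0) :
    Finite (↥(Subgroup.centralizer {Mu}) ⧸
      (Subgroup.zpowers Mu).subgroupOf (Subgroup.centralizer {Mu})) := by
  classical
  have hαpos : (0:ℝ) < α := lt_trans one_pos hα
  have hαβ : α⁻¹ < α := lt_trans (inv_lt_one_of_one_lt₀ hα) hα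
  set Γ : Subgroup (GL (Fin 2) ℤ) := Subgroup.centralizer {Mu} with hΓ
  set F : Matrix (Fin 2) (Fin 2) ℤ →+* Matrix (Fin 2) (Fin 2) ℝ :=
    (Int.castRingHom ℝ).mapMatrix with hF
  set cst : ↥Γ → Matrix (Fin 2) (Fin 2) ℝ :=
    fun N => F ((N : GL (Fin 2) ℤ) : Matrix (Fin 2) (Fin 2) ℤ) with hcst
  have hA' : A = F (Mu : Matrix (Fin 2) (Fin 2) ℤ) := by
    rw [hA, hF, RingHom.mapMatrix_apply]
  have hcomm : ∀ N : ↥Γ, A * cst N = cst N * A := by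
    intro N
    have h2 : Mu * (N : GL (Fin 2) ℤ) = (N : GL (Fin 2) ℤ) * Mu :=
      Subgroup.mem_centralizer_iff.mp N.2 Mu rfl
    have h3 : (Mu : Matrix (Fin 2) (Fin 2) ℤ) * ((N : GL (Fin 2) ℤ) : Matrix (Fin 2) (Fin 2) ℤ)
        = ((N : GL (Fin 2) ℤ) : Matrix (Fin 2) (Fin 2) ℤ) * (Mu : Matrix (Fin 2) (Fin 2) ℤ) := by
      exact_mod_cast congrArg Units.val h2
    have h4 := congrArg F h3
    rw [_root_.map_mul, _root_.map_mul] at h4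
    rw [hA']
    exact h4
  have hcst_mul : ∀ N N' : ↥Γ, cst (N * N') = cst N * cst N' := by
    intro N N'
    have : ((↑(N * N') : GL (Fin 2) ℤ) : Matrix (Fin 2) (Fin 2) ℤ)
        = ((N : GL (Fin 2) ℤ) : Matrix (Fin 2) (Fin 2) ℤ) * ((N' : GL (Fin 2) ℤ) : Matrix (Fin 2) (Fin 2) ℤ) := by
      push_cast
      rfl
    rw [hcst]
    simp only [this, _root_.map_mul]
  set v : Fin 2 → ℝ := ![A 0 1, α - A 0 0] with hv
  set w : Fin 2 → ℝ := ![A 0 1, α⁻¹ - A 0 0] with hw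
  set l : ↥Γ → ℝ := fun N => ((cst N).mulVec v) 0 / A 0 1 with hl
  set m : ↥Γ → ℝ := fun N => ((cst N).mulVec w) 0 / A 0 1 with hm
  have hBv : ∀ N : ↥Γ, (cst N).mulVec v = l N • v := by
    intro N
    rw [hl]
    rw [hv]
    exact aux_scal A (cst N) α hb hAdet hroot (hcomm N)
  have hBw : ∀ N : ↥Γ, (cst N).mulVec w = m N • w := by
    intro N
    rw [hm]
    rw [hw]
    exact aux_scal A (cst N) α⁻¹ hb hAdet hrootβ (hcomm N)
  have hv0 : v 0 = A 0 1 := by rw [hv]; rfl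
  have hw0 : w 0 = A 0 1 := by rw [hw]; rfl
  have hl1 : l 1 = 1 := by
    have hc1 : cst 1 = 1 := by
      have h1 : ((↑(1 : ↥Γ) : GL (Fin 2) ℤ) : Matrix (Fin 2) (Fin 2) ℤ) = 1 := by
        push_cast
        rfl
      rw [hcst]
      simp only [h1, _root_.map_one]
    rw [hl]
    simp only [hc1, Matrix.one_mulVec, hv0]
    exact div_self hb
  have hlmul : ∀ N N' : ↥Γ, l (N * N') = l N * l N' := by
    intro N N'
    have h : (cst (N * N')).mulVec v = (l N * l N') • v := by
      rw [hcst_mul, ← Matrix.mulVec_mulVec, hBv N', Matrix.mulVec_smul, hBv N,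
        smul_smul, mul_comm (l N)]
    have h0 := congrFun h 0
    simp only [Pi.smul_apply, smul_eq_mul, hv0] at h0
    show (cst (N * N') *ᵥ v) 0 / A 0 1 = l N * l N'
    rw [h0, mul_div_cancel_right₀ _ hb]
  set φ : ↥Γ →* ℝ := { toFun := l, map_one' := hl1, map_mul' := hlmul } with hφ
  have hφl : ∀ N : ↥Γ, (φ.toHomUnits N : ℝ) = l N := by
    intro N
    rw [MonoidHom.coe_toHomUnits]
    rfl
  have hlne : ∀ N : ↥Γ, l N ≠ 0 := by
    intro N
    rw [← hφl]
    exact Units.ne_zero _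
  have hlzpow : ∀ (N : ↥Γ) (k : ℤ), l (N ^ k) = l N ^ k := by
    intro N k
    rw [← hφl, ← hφl, map_zpow]
    exact Units.val_zpow_eq_zpow_val _ _
  have hMuΓ : Mu ∈ Γ := by
    rw [hΓ]
    exact Subgroup.mem_centralizer_iff.mpr
      (fun g hg => by rw [Set.mem_singleton_iff] at hg; rw [hg])
  set Mu' : ↥Γ := ⟨Mu, hMuΓ⟩ with hMu'
  have hcstMu : cst Mu' = A := by
    rw [hcst, hA', hMu']
  have hlMu : l Mu' = α := by
    have h := aux_eig A α hAdet hroot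
    rw [← hv] at h
    show (cst Mu' *ᵥ v) 0 / A 0 1 = α
    rw [hcstMu, h]
    simp only [Pi.smul_apply, smul_eq_mul, hv0]
    rw [mul_div_cancel_right₀ _ hb]
  set P : Matrix (Fin 2) (Fin 2) ℝ :=
    Matrix.of ![![A 0 1, A 0 1], ![α - A 0 0, α⁻¹ - A 0 0]] with hP
  have hPdet : P.det ≠ 0 := by
    rw [hP, Matrix.det_fin_two]
    simp only [Matrix.of_apply, Matrix.cons_val', Matrix.cons_val_zero, Matrix.cons_val_one,
      Matrix.head_cons, Matrix.empty_val', Matrix.cons_val_fin_one, Matrix.head_fin_const]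
    intro hcon
    apply hb
    have h2 : A 0 1 * (α⁻¹ - α) = 0 := by ring_nf; ring_nf at hcon; linarith
    rcases mul_eq_zero.mp h2 with h | h
    · exact h
    · exfalso; have : α⁻¹ = α := by linarith
      linarith [hαβ]
  have hPunit : IsUnit P.det := isUnit_iff_ne_zero.mpr hPdet
  have hPD : ∀ N : ↥Γ, cst N * P = P * Matrix.diagonal ![l N, m N] := by
    intro N
    have h1 := congrFun (hBv N) 0
    have h2 := congrFun (hBv N) 1
    have h3 := congrFun (hBw N) 0
    have h4 := congrFun (hBw N) 1
    rw [hv] at h1 h2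
    rw [hw] at h3 h4
    simp only [Matrix.mulVec, dotProduct, Fin.sum_univ_two, Pi.smul_apply, smul_eq_mul,
      Matrix.cons_val_zero, Matrix.cons_val_one, Matrix.head_cons] at h1 h2 h3 h4
    funext i j
    fin_cases i <;> fin_cases j <;>
      simp only [Matrix.mul_apply, Fin.sum_univ_two, hP, Matrix.of_apply, Matrix.cons_val',
        Matrix.cons_val_zero, Matrix.cons_val_one, Matrix.head_cons, Matrix.empty_val',
        Matrix.cons_val_fin_one, Matrix.head_fin_const, Matrix.diagonal_apply,
        if_true, if_false] <;>
      simp <;> linarith [h1, h2, h3, h4]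
  have hBeq : ∀ N : ↥Γ, cst N = P * Matrix.diagonal ![l N, m N] * P⁻¹ := by
    intro N
    rw [← hPD N, Matrix.mul_nonsing_inv_cancel_right _ _ hPunit]
  have hDdet : ∀ N : ↥Γ, (Matrix.diagonal ![l N, m N]).det = l N * m N := by
    intro N
    simp [Matrix.det_diagonal, Fin.prod_univ_two]
  have hdetlm : ∀ N : ↥Γ, (cst N).det = l N * m N := by
    intro N
    have h := congrArg Matrix.det (hPD N)
    rw [Matrix.det_mul, Matrix.det_mul, hDdet] at h
    have h2 : (cst N).det * P.det = (l N * m N) * P.det := by linarith [h]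
    exact mul_right_cancel₀ hPdet h2
  have htrace : ∀ N : ↥Γ, (cst N).trace = l N + m N := by
    intro N
    rw [hBeq N, Matrix.trace_mul_comm, ← Matrix.mul_assoc,
      Matrix.nonsing_inv_mul _ hPunit, Matrix.one_mul]
    simp [Matrix.trace_fin_two, Matrix.diagonal]
  have hinj : Function.Injective (fun N : ↥Γ => (l N, m N)) := by
    intro N N' h
    have h1 : l N = l N' := congrArg Prod.fst h
    have h2 : m N = m N' := congrArg Prod.snd h
    have h3 : cst N = cst N' := by rw [hBeq N, hBeq N', h1, h2]
    have h4 : ((N : GL (Fin 2) ℤ) : Matrix (Fin 2) (Fin 2) ℤ)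
        = ((N' : GL (Fin 2) ℤ) : Matrix (Fin 2) (Fin 2) ℤ) := by
      apply Matrix.ext
      intro i j
      rw [hcst, hF] at h3
      have h5 := congrFun (congrFun h3 i) j
      simp only [RingHom.mapMatrix_apply, Matrix.map_apply, Int.coe_castRingHom] at h5
      exact_mod_cast h5
    exact Subtype.ext (Units.ext h4)
  have hdetpm : ∀ N : ↥Γ, l N * m N = 1 ∨ l N * m N = -1 := by
    intro N
    have hu : IsUnit (((N : GL (Fin 2) ℤ) : Matrix (Fin 2) (Fin 2) ℤ).det) :=
      (Matrix.isUnit_iff_isUnit_det _).mp (N : GL (Fin 2) ℤ).isUnit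
    have hc : (cst N).det
        = ((((N : GL (Fin 2) ℤ) : Matrix (Fin 2) (Fin 2) ℤ).det : ℤ) : ℝ) := by
      rw [hcst, hF, ← RingHom.map_det]
      rfl
    rcases Int.isUnit_iff.mp hu with h | h <;> [left; right] <;>
      rw [← hdetlm N, hc, h] <;> norm_num
  have htrZ : ∀ N : ↥Γ, ∃ t : ℤ, l N + m N = (t : ℝ) := by
    intro N
    refine ⟨((N : GL (Fin 2) ℤ) : Matrix (Fin 2) (Fin 2) ℤ).trace, ?_⟩
    rw [← htrace N, hcst, hF]
    rw [Matrix.trace_fin_two, Matrix.trace_fin_two]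
    simp only [RingHom.mapMatrix_apply, Matrix.map_apply, Int.coe_castRingHom]
    push_cast
    ring
  -- finite set of possible eigenvalues
  set L : Set ℝ := {x : ℝ | ∃ t d : ℤ, |(t:ℝ)| ≤ 2*α + 1 ∧ ((d:ℝ) = 1 ∨ (d:ℝ) = -1) ∧
    x^2 - (t:ℝ)*x + (d:ℝ) = 0} with hL
  have hLfin : L.Finite := by
    have hsub : L ⊆ ⋃ t ∈ Finset.Icc (-⌈2*α+1⌉) ⌈2*α+1⌉,
        ({x : ℝ | x^2 - (t:ℝ)*x + 1 = 0} ∪ {x : ℝ | x^2 - (t:ℝ)*x + (-1) = 0}) := by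
      rintro x ⟨t, d, hT, hd, hx⟩
      have habs := abs_le.mp hT
      have ht1 : t ≤ ⌈2*α+1⌉ := by
        have h2 : (t:ℝ) ≤ ((⌈2*α+1⌉ : ℤ) : ℝ) := le_trans habs.2 (Int.le_ceil (2*α+1))
        exact_mod_cast h2
      have ht0 : -⌈2*α+1⌉ ≤ t := by
        have h2 : ((-⌈2*α+1⌉ : ℤ) : ℝ) ≤ (t:ℝ) := by
          push_cast
          linarith [Int.le_ceil (2*α+1), habs.1]
        exact_mod_cast h2
      simp only [Set.mem_iUnion, exists_prop]
      refine ⟨t, Finset.mem_Icc.mpr ⟨ht0, ht1⟩, ?_⟩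
      rcases hd with hd | hd
      · left; rw [hd] at hx; exact hx
      · right; rw [hd] at hx; exact hx
    refine Set.Finite.subset ?_ hsub
    refine Set.Finite.biUnion (Finset.finite_toSet _) ?_
    intro t _
    exact (quad_finite (t:ℝ) 1).union (quad_finite (t:ℝ) (-1))
  set S : Set ↥Γ := {N : ↥Γ | 1 ≤ |l N| ∧ |l N| ≤ α} with hS
  have himg : (fun N : ↥Γ => (l N, m N)) '' S ⊆ L ×ˢ L := by
    rintro ⟨x, y⟩ ⟨N, hN, heq⟩
    obtain ⟨hN1, hN2⟩ := hN
    obtain ⟨t, ht⟩ := htrZ N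
    have hlx : l N = x := congrArg Prod.fst heq
    have hmy : m N = y := congrArg Prod.snd heq
    have hmabs : |m N| ≤ 1 := by
      have hmul : |l N| * |m N| = 1 := by
        rw [← abs_mul]
        rcases hdetpm N with h | h <;> rw [h] <;> norm_num
      nlinarith [abs_nonneg (m N), hN1]
    have htb : |(t:ℝ)| ≤ 2*α + 1 := by
      rw [← ht]
      calc |l N + m N| ≤ |l N| + |m N| := abs_add_le _ _
        _ ≤ 2*α + 1 := by linarith [hN2, hmabs, hα]
    obtain ⟨d, hd, hdval⟩ : ∃ d : ℤ, ((d:ℝ) = 1 ∨ (d:ℝ) = -1) ∧ (d:ℝ) = l N * m N := by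
      rcases hdetpm N with h | h
      · exact ⟨1, Or.inl (by norm_num), by rw [h]; norm_num⟩
      · exact ⟨-1, Or.inr (by push_cast; ring), by rw [h]; push_cast; ring⟩
    constructor
    · refine ⟨t, d, htb, hd, ?_⟩
      have hr : l N ^ 2 - (l N + m N) * l N + l N * m N = 0 := by ring
      rw [ht, ← hdval, hlx] at hr
      exact hr
    · refine ⟨t, d, htb, hd, ?_⟩
      have hr : m N ^ 2 - (l N + m N) * m N + l N * m N = 0 := by ring
      rw [ht, ← hdval, hmy] at hr
      exact hr
  have hSfin : S.Finite :=
    Set.Finite.of_finite_image ((hLfin.prod hLfin).subset himg) hinj.injOn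
  set H : Subgroup ↥Γ := (Subgroup.zpowers Mu).subgroupOf Γ with hH
  have hsurj : ∀ x : ↥Γ ⧸ H, ∃ N : ↥Γ, N ∈ S ∧ (QuotientGroup.mk N : ↥Γ ⧸ H) = x := by
    intro x
    obtain ⟨N, rfl⟩ := QuotientGroup.mk_surjective x
    set r : ℝ := |l N| with hr
    have hr0 : 0 < r := abs_pos.mpr (hlne N)
    set k : ℤ := ⌊Real.logb α r⌋ with hk
    have hαne1 : α ≠ 1 := ne_of_gt hα
    have hrlog : α ^ (Real.logb α r) = r := Real.rpow_logb hαpos hαne1 hr0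
    have hk1 : α ^ k ≤ r := by
      have h1 : ((k:ℝ)) ≤ Real.logb α r := Int.floor_le _
      calc α ^ k = α ^ ((k:ℝ)) := (Real.rpow_intCast α k).symm
        _ ≤ α ^ Real.logb α r := (Real.rpow_le_rpow_left_iff hα).mpr h1
        _ = r := hrlog
    have hk2 : r < α ^ (k+1) := by
      have h1 : Real.logb α r < ((k:ℝ) + 1) := Int.lt_floor_add_one _
      calc r = α ^ Real.logb α r := hrlog.symm
        _ < α ^ ((k:ℝ)+1) := (Real.rpow_lt_rpow_left_iff hα).mpr h1
        _ = α ^ (k+1) := by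
            rw [← Real.rpow_intCast α (k+1)]
            push_cast
            ring_nf
    set N' : ↥Γ := N * (Mu' ^ k)⁻¹ with hN'
    have hαk : (0:ℝ) < α ^ k := zpow_pos hαpos k
    have hlinv : l ((Mu' ^ k)⁻¹) = (α ^ k)⁻¹ := by
      rw [← _root_.zpow_neg, hlzpow, hlMu, _root_.zpow_neg]
    have hlN' : l N' = l N * (α ^ k)⁻¹ := by
      rw [hN', hlmul, hlinv]
    have habsN' : |l N'| = r * (α ^ k)⁻¹ := by
      rw [hlN', abs_mul, hr, abs_of_pos (inv_pos.mpr hαk)]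
    have hmemS : N' ∈ S := by
      constructor
      · rw [habsN', ← div_eq_mul_inv, le_div_iff₀ hαk, one_mul]
        exact hk1
      · rw [habsN', ← div_eq_mul_inv, div_le_iff₀ hαk]
        have : α ^ (k+1) = α ^ k * α := by
          rw [zpow_add_one₀ (ne_of_gt hαpos)]
        nlinarith [hk2]
    refine ⟨N', hmemS, ?_⟩
    rw [QuotientGroup.eq]
    have hgrp : N'⁻¹ * N = Mu' ^ k := by
      rw [hN']
      group
    rw [hgrp, hH, Subgroup.mem_subgroupOf]
    have hcoe : ((Mu' ^ k : ↥Γ) : GL (Fin 2) ℤ) = Mu ^ k := by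
      rw [SubgroupClass.coe_zpow, hMu']
    exact Subgroup.mem_zpowers_iff.mpr ⟨k, hcoe.symm⟩
  have : Finite (↥Γ ⧸ H) := by
    have := hSfin.to_subtype
    exact Finite.of_surjective (fun p : ↥S => (QuotientGroup.mk (p : ↥Γ) : ↥Γ ⧸ H))
      (fun x => by
        obtain ⟨N, hNS, hNx⟩ := hsurj x
        exact ⟨⟨N, hNS⟩, hNx⟩)
  exact this

/-- Let `M ∈ SL₂(ℤ)` have real eigenvalues `α` and `1/α` with `α > 1`.
Let `Γ` be the centralizer of `M` in `GL₂(ℤ)` and `⟨M⟩` the cyclic subgroup generated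
by `M`.  Then the set of elements of finite order of the quotient `Γ/⟨M⟩` is finite. -/
theorem finite_torsion_elements_of_centralizer_quotient_SL2
    (M : Matrix (Fin 2) (Fin 2) ℤ) (hdet : M.det = 1)
    (α : ℝ) (hα : 1 < α)
    (hchar : M.charpoly.map (Int.castRingHom ℝ) = (X - C α) * (X - C α⁻¹))
    (Mu : GL (Fin 2) ℤ) (hMu : (Mu : Matrix (Fin 2) (Fin 2) ℤ) = M) :
    {x : ↥(Subgroup.centralizer {Mu}) ⧸
        (Subgroup.zpowers Mu).subgroupOf (Subgroup.centralizer {Mu}) |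
      IsOfFinOrder x}.Finite := by
  classical
  have hαpos : (0:ℝ) < α := lt_trans one_pos hα
  have hα0 : α ≠ 0 := ne_of_gt hαpos
  set A : Matrix (Fin 2) (Fin 2) ℝ := M.map (Int.castRingHom ℝ) with hA
  have hAdet : A.det = 1 := by
    rw [hA, Matrix.det_fin_two]
    rw [Matrix.det_fin_two] at hdet
    simp only [Matrix.map_apply, Int.coe_castRingHom]
    exact_mod_cast congrArg (fun z : ℤ => (z : ℝ)) hdet
  -- trace relation
  have htr : ((M.trace : ℤ) : ℝ) = α + α⁻¹ := by
    have hcoeff : M.charpoly.coeff 1 = -M.trace := by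
      have := Matrix.trace_eq_neg_charpoly_coeff M
      simp only [Fintype.card_fin] at this
      linarith [this]
    have h1 : ((M.charpoly.map (Int.castRingHom ℝ)).coeff 1) = ((M.charpoly.coeff 1 : ℤ) : ℝ) := by
      simp [Polynomial.coeff_map]
    have hexp : (X - C α) * (X - C α⁻¹) = X^2 - C (α + α⁻¹) * X + C (α * α⁻¹) := by
      simp only [C_add, C_mul]
      ring
    have h2 : ((M.charpoly.map (Int.castRingHom ℝ)).coeff 1) = -(α + α⁻¹) := by
      rw [hchar, hexp]
      simp [Polynomial.coeff_one, Polynomial.coeff_X]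
    rw [h1, hcoeff] at h2
    push_cast at h2
    linarith [h2]
  have hAtr : A.trace = α + α⁻¹ := by
    rw [hA, Matrix.trace_fin_two]
    rw [Matrix.trace_fin_two] at htr
    simp only [Matrix.map_apply, Int.coe_castRingHom]
    push_cast at htr ⊢
    linarith [htr]
  have hroot : α^2 - A.trace * α + 1 = 0 := by
    rw [hAtr]; field_simp; ring
  have hrootβ : (α⁻¹)^2 - A.trace * α⁻¹ + 1 = 0 := by
    rw [hAtr]; field_simp; ring
  have hαβ : α⁻¹ < α := lt_trans (inv_lt_one_of_one_lt₀ hα) hα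
  -- the off-diagonal entry is nonzero
  have hb : A 0 1 ≠ 0 := by
    intro hb0
    have hd2 : A 0 0 * A 1 1 - A 0 1 * A 1 0 = 1 := by
      rw [← Matrix.det_fin_two]; exact hAdet
    rw [hb0] at hd2
    have had : M 0 0 * M 1 1 = 1 := by
      have : ((M 0 0 * M 1 1 : ℤ) : ℝ) = 1 := by
        push_cast
        simpa [hA, Matrix.map_apply] using hd2
      exact_mod_cast this
    have hfact : (α - A 0 0) * (α - A 1 1) = 0 := by
      have htr2 : A.trace = A 0 0 + A 1 1 := Matrix.trace_fin_two A
      have had' : A 0 0 * A 1 1 = 1 := by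
        have : ((M 0 0 * M 1 1 : ℤ) : ℝ) = 1 := by exact_mod_cast congrArg (fun z : ℤ => (z:ℝ)) had
        push_cast at this
        simpa [hA, Matrix.map_apply] using this
      nlinarith [hroot, htr2, had']
    have hA00 : A 0 0 = ((M 0 0 : ℤ) : ℝ) := by simp [hA, Matrix.map_apply]
    have hA11 : A 1 1 = ((M 1 1 : ℤ) : ℝ) := by simp [hA, Matrix.map_apply]
    rcases Int.eq_one_or_neg_one_of_mul_eq_one' had with ⟨h1, h2⟩ | ⟨h1, h2⟩ <;>
      rcases mul_eq_zero.mp hfact with h | h <;>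
      simp only [hA00, hA11, h1, h2] at h <;> push_cast at h <;> linarith
  have hfin : Finite (↥(Subgroup.centralizer {Mu}) ⧸
      (Subgroup.zpowers Mu).subgroupOf (Subgroup.centralizer {Mu})) :=
    gamma_quot_finite α hα Mu A (by rw [hA, hMu]) hAdet hroot hrootβ hb
  exact Set.toFinite _
end
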